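/- arXiv:1110.2203 — 7 statements merged into one kernel-verified Lean document; each statement's English description precedes it below -/
import Mathlib

section
/- Let T be a tree (a finite connected acyclic simple graph) with vertex set U, and let S be a nonempty finite collection of subsets of U, each of which is tree convex under T. Then the intersection of all sets in S is nonempty if and only if E1 ∩ E2 is nonempty for every pair of sets E1, E2 ∈ S. -/
/-!
Tree convex sets have the Helly property. For three of them, pick `a ∈ B ∩ C`, `b ∈ A ∩ C`,
`c ∈ A ∩ B`: the path from `b` to `c` lies in `A`, and also in `B ∪ C` because it is part of
the walk `b ⟶ a ⟶ c`. Where it leaves `C` it crosses an edge `xy` with `x ∈ C`, `y ∈ B \ C`,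
and acyclicity forces `x ∈ B`. For a finite family, induct while shrinking a "window" convex
set `C` to `C ∩ A` for each new member `A`; the three-set case keeps the family pairwise
intersecting with the window.
-/

/-- A set `A` of vertices of a tree `T` is *tree convex* under `T` if it is the vertex
set of a subtree of `T`, i.e. the subgraph of `T` induced on `A` is connected
(connectedness includes nonemptiness). -/
def TreeConvexSet {U : Type} (T : SimpleGraph U) (A : Set U) : Prop :=
  (T.induce A).Connected

open SimpleGraph

namespace TreeConvexSet

variable {U : Type} {T : SimpleGraph U} {A B C : Set U}

theorem exists_isPath_support_subset (hA : TreeConvexSet T A) {u v : U} (hu : u ∈ A)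
    (hv : v ∈ A) : ∃ p : T.Walk u v, p.IsPath ∧ ∀ x ∈ p.support, x ∈ A := by
  classical
  obtain ⟨q⟩ := hA.preconnected ⟨u, hu⟩ ⟨v, hv⟩
  let p := (q.map (Embedding.induce A).toHom).bypass
  refine ⟨p, Walk.bypass_isPath _, fun x hx => ?_⟩
  obtain ⟨y, -, rfl⟩ := List.mem_map.mp
    ((Walk.support_map _ q) ▸ Walk.support_bypass_subset_support _ hx)
  exact y.2

theorem support_subset (hT : T.IsAcyclic) (hA : TreeConvexSet T A) {u v : U} (hu : u ∈ A)
    (hv : v ∈ A) {p : T.Walk u v} (hp : p.IsPath) : ∀ x ∈ p.support, x ∈ A := by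
  obtain ⟨q, hq, hqA⟩ := hA.exists_isPath_support_subset hu hv
  have := hT.subsingleton_path u v
  obtain rfl : p = q := congrArg Subtype.val (Subsingleton.elim ⟨p, hp⟩ ⟨q, hq⟩)
  exact hqA

theorem inter (hT : T.IsAcyclic) (hA : TreeConvexSet T A) (hB : TreeConvexSet T B)
    (hAB : (A ∩ B).Nonempty) : TreeConvexSet T (A ∩ B) := by
  obtain ⟨u, huA, huB⟩ := hAB
  refine induce_connected_of_patches u ⟨huA, huB⟩ fun {v} ⟨hvA, hvB⟩ => ?_
  obtain ⟨p, hp, -⟩ := hA.exists_isPath_support_subset huA hvA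
  refine ⟨{x | x ∈ p.support}, fun x hx => ⟨hA.support_subset hT huA hvA hp x hx,
    hB.support_subset hT huB hvB hp x hx⟩, p.start_mem_support, p.end_mem_support, ?_⟩
  exact p.connected_induce_support.preconnected _ _

/-- The path from `a` to `y` either passes through `x` or extends by the edge to the path
from `a` to `x`. -/
theorem mem_or_mem_of_adj (hT : T.IsAcyclic) (hB : TreeConvexSet T B) (hC : TreeConvexSet T C)
    {a x y : U} (haB : a ∈ B) (haC : a ∈ C) (hx : x ∈ C) (hy : y ∈ B) (hxy : T.Adj x y) :
    x ∈ B ∨ y ∈ C := by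
  obtain ⟨q, hq, hqB⟩ := hB.exists_isPath_support_subset haB hy
  by_cases hxq : x ∈ q.support
  · exact .inl (hqB x hxq)
  · exact .inr (hC.support_subset hT haC hx (hq.concat hxq hxy.symm) y
      (by simp [Walk.support_concat]))

theorem inter_inter_nonempty (hT : T.IsAcyclic) (hA : TreeConvexSet T A)
    (hB : TreeConvexSet T B) (hC : TreeConvexSet T C) (hAB : (A ∩ B).Nonempty)
    (hAC : (A ∩ C).Nonempty) (hBC : (B ∩ C).Nonempty) : (A ∩ B ∩ C).Nonempty := by
  classical
  obtain ⟨a, haB, haC⟩ := hBC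
  obtain ⟨b, hbA, hbC⟩ := hAC
  obtain ⟨c, hcA, hcB⟩ := hAB
  by_cases hcC : c ∈ C
  · exact ⟨c, ⟨hcA, hcB⟩, hcC⟩
  obtain ⟨pC, -, hpC⟩ := hC.exists_isPath_support_subset hbC haC
  obtain ⟨pB, -, hpB⟩ := hB.exists_isPath_support_subset haB hcB
  let p := (pC.append pB).bypass
  have hpA : ∀ x ∈ p.support, x ∈ A := hA.support_subset hT hbA hcA (Walk.bypass_isPath _)
  have hpBC : ∀ x ∈ p.support, x ∈ B ∨ x ∈ C := fun x hx =>
    (Walk.mem_support_append_iff _ _).mp (Walk.support_bypass_subset_support _ hx) |>.elim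
      (fun h => .inr (hpC x h)) (fun h => .inl (hpB x h))
  obtain ⟨d, hd, hdC, hdC'⟩ := p.exists_boundary_dart C hbC hcC
  have hdB : d.snd ∈ B := (hpBC _ (p.dart_snd_mem_support_of_mem_darts hd)).resolve_right hdC'
  have hdB' : d.fst ∈ B := (hB.mem_or_mem_of_adj hT hC haB haC hdC hdB d.adj).resolve_right hdC'
  exact ⟨d.fst, ⟨hpA _ (p.dart_fst_mem_support_of_mem_darts hd), hdB'⟩, hdC⟩

theorem inter_biInter_nonempty (hT : T.IsAcyclic) (S : Finset (Set U))
    (hconv : ∀ A ∈ S, TreeConvexSet T A) (hpair : ∀ A ∈ S, ∀ B ∈ S, (A ∩ B).Nonempty)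
    (hC : TreeConvexSet T C) (hCS : ∀ A ∈ S, (C ∩ A).Nonempty) :
    (C ∩ ⋂ A ∈ S, A).Nonempty := by
  classical
  induction S using Finset.induction_on generalizing C with
  | empty => simpa using Set.nonempty_coe_sort.mp hC.nonempty
  | insert A S _ ih =>
    simp only [Finset.mem_insert, forall_eq_or_imp] at hconv hpair hCS
    rw [Finset.set_biInter_insert, ← Set.inter_assoc]
    refine ih hconv.2 (fun B hB D hD => hpair.2 B hB |>.2 D hD) (hC.inter hT hconv.1 hCS.1)
      fun B hB => ?_
    exact hC.inter_inter_nonempty hT hconv.1 (hconv.2 B hB) hCS.1 (hCS.2 B hB)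
      (hpair.1.2 B hB)

end TreeConvexSet

theorem tree_convex_sets_intersection_general {U : Type}
    (T : SimpleGraph U) (hT : T.IsTree)
    (S : Finset (Set U))
    (hconv : ∀ A ∈ S, TreeConvexSet T A) :
    (⋂ A ∈ S, A).Nonempty ↔ ∀ A ∈ S, ∀ B ∈ S, (A ∩ B).Nonempty := by
  refine ⟨fun ⟨x, hx⟩ A hA B hB => ⟨x, Set.mem_iInter₂.mp hx A hA, Set.mem_iInter₂.mp hx B hB⟩,
    fun hpair => ?_⟩
  have huniv : TreeConvexSet T Set.univ := (induceUnivIso T).connected_iff.mpr hT.connected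
  simpa using TreeConvexSet.inter_biInter_nonempty hT.isAcyclic S hconv hpair huniv
    fun A hA => by simpa using (hpair A hA A hA)

/-- **Tree Convex Sets Intersection.**  If `S` is a nonempty finite collection of
subsets of the vertex set of a tree `T`, each tree convex under `T`, then the
intersection of all sets of `S` is nonempty iff every two sets of `S` have a
nonempty intersection. -/
theorem tree_convex_sets_intersection {U : Type} [Fintype U]
    (T : SimpleGraph U) (hT : T.IsTree)
    (S : Finset (Set U)) (hS : S.Nonempty)
    (hconv : ∀ A ∈ S, TreeConvexSet T A) :
    (⋂ A ∈ S, A).Nonempty ↔ ∀ A ∈ S, ∀ B ∈ S, (A ∩ B).Nonempty :=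
  tree_convex_sets_intersection_general T hT S hconv
end

section
/- Let T be a tree with vertex set U, let r ∈ U be a fixed root, and let A and B be subsets of U that are tree convex under T. Let a ∈ A be a vertex of A at minimal graph distance from r (a root of A) and let b ∈ B be a vertex of B at minimal graph distance from r (a root of B), and suppose the distance from r to a is at least the distance from r to b. If A ∩ B is nonempty, then a is a root of A ∩ B, i.e., a ∈ A ∩ B and the distance from r to a is minimal among the distances from r to the vertices of A ∩ B. -/
namespace SimpleGraph

variable {U : Type} {T : SimpleGraph U}

theorem Walk.dist_add_dist_le_length {u v x : U} (p : T.Walk u v)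
    (hx : x ∈ p.support) : T.dist u x + T.dist x v ≤ p.length := by
  classical
  have hsplit := congrArg Walk.length (p.take_spec hx)
  rw [Walk.length_append] at hsplit
  have := dist_le (p.takeUntil x hx)
  have := dist_le (p.dropUntil x hx)
  omega

namespace IsTree

theorem mem_support_of_dist_add_dist_eq (hT : T.IsTree) {u v x : U} {p : T.Walk u v}
    (hp : p.IsPath) (hx : T.dist u x + T.dist x v = T.dist u v) : x ∈ p.support := by
  obtain ⟨q₁, -, hq₁⟩ := hT.connected.exists_path_of_dist u x
  obtain ⟨q₂, -, hq₂⟩ := hT.connected.exists_path_of_dist x v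
  have hq : (q₁.append q₂).IsPath :=
    Walk.isPath_of_length_eq_dist _ (by rw [Walk.length_append, hq₁, hq₂, hx])
  obtain ⟨_, -, huniq⟩ := hT.existsUnique_path u v
  rw [(huniq p hp).trans (huniq _ hq).symm, Walk.mem_support_append_iff]
  exact Or.inl q₁.end_mem_support

theorem dist_add_dist_eq_of_le (hT : T.IsTree) {r v x y : U}
    (hx : T.dist r x + T.dist x v = T.dist r v) (hy : T.dist r y + T.dist y v = T.dist r v)
    (hxy : T.dist r x ≤ T.dist r y) : T.dist r x + T.dist x y = T.dist r y := by
  classical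
  obtain ⟨q₁, -, hq₁⟩ := hT.connected.exists_path_of_dist r y
  obtain ⟨q₂, -, hq₂⟩ := hT.connected.exists_path_of_dist y v
  have hq : (q₁.append q₂).IsPath :=
    Walk.isPath_of_length_eq_dist _ (by rw [Walk.length_append, hq₁, hq₂, hy])
  have htri : T.dist r y ≤ T.dist r x + T.dist x y := hT.connected.dist_triangle
  have hcomm : T.dist y x = T.dist x y := dist_comm
  rcases (Walk.mem_support_append_iff _ _).mp (hT.mem_support_of_dist_add_dist_eq hq hx)
    with hx₁ | hx₂
  · have := q₁.dist_add_dist_le_length hx₁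
    omega
  · have := q₂.dist_add_dist_le_length hx₂
    omega

theorem mem_of_dist_add_dist_eq (hT : T.IsTree) {S : Set U} (hS : (T.induce S).Connected)
    {u v x : U} (hu : u ∈ S) (hv : v ∈ S) (hx : T.dist u x + T.dist x v = T.dist u v) :
    x ∈ S := by
  classical
  obtain ⟨w⟩ := hS ⟨u, hu⟩ ⟨v, hv⟩
  have hmem := Walk.support_bypass_subset_support _
    (hT.mem_support_of_dist_add_dist_eq (w.map (Embedding.induce S).toHom).bypass_isPath hx)
  rw [Walk.support_map, List.mem_map] at hmem
  obtain ⟨z, -, rfl⟩ := hmem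
  exact z.2

theorem dist_add_dist_eq_of_forall_dist_le (hT : T.IsTree) {S : Set U}
    (hS : (T.induce S).Connected) {r s u : U} (hs : s ∈ S)
    (hmin : ∀ x ∈ S, T.dist r s ≤ T.dist r x) (hu : u ∈ S) :
    T.dist r s + T.dist s u = T.dist r u := by
  suffices key : ∀ {x y : S}, (T.induce S).Walk x y → (∀ z ∈ S, T.dist r y ≤ T.dist r z) →
      T.dist r y + T.dist y x = T.dist r x from
    key (hS ⟨u, hu⟩ ⟨s, hs⟩).some hmin
  intro x y p hymin
  induction p with
  | nil => simp
  | @cons x w y hadj p ih =>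
    have hadj : T.Adj x w := hadj
    have hxw : T.dist x w = 1 := dist_eq_one_iff_adj.mpr hadj
    have hwx : T.dist w x = 1 := dist_eq_one_iff_adj.mpr hadj.symm
    have ih : T.dist r y + T.dist (y : U) w = T.dist r w := ih hymin
    rcases hT.dist_eq_dist_add_one_of_adj r hadj with hw_closer | hx_closer
    · have : T.dist (y : U) x ≤ T.dist (y : U) w + T.dist (w : U) x :=
        hT.connected.dist_triangle
      have : T.dist r x ≤ T.dist r y + T.dist (y : U) x := hT.connected.dist_triangle
      omega
    · exact hT.dist_add_dist_eq_of_le ih (by omega) (hymin x x.2)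

end IsTree

end SimpleGraph

open SimpleGraph in
theorem root_of_inter_general {U : Type}
    (T : SimpleGraph U) (hT : T.IsTree) (r : U) (A B : Set U)
    (hA : TreeConvexSet T A) (hB : TreeConvexSet T B)
    (a : U) (haA : a ∈ A) (haMin : ∀ a' ∈ A, T.dist r a ≤ T.dist r a')
    (b : U) (hbB : b ∈ B) (hbMin : ∀ b' ∈ B, T.dist r b ≤ T.dist r b')
    (hba : T.dist r b ≤ T.dist r a)
    (hne : (A ∩ B).Nonempty) :
    a ∈ A ∩ B ∧ ∀ u ∈ A ∩ B, T.dist r a ≤ T.dist r u := by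
  obtain ⟨c, hcA, hcB⟩ := hne
  have hac : T.dist r a + T.dist a c = T.dist r c :=
    hT.dist_add_dist_eq_of_forall_dist_le hA haA haMin hcA
  have hbc : T.dist r b + T.dist b c = T.dist r c :=
    hT.dist_add_dist_eq_of_forall_dist_le hB hbB hbMin hcB
  have hba' : T.dist r b + T.dist b a = T.dist r a := hT.dist_add_dist_eq_of_le hbc hac hba
  have haB : a ∈ B := hT.mem_of_dist_add_dist_eq hB hbB hcB (by omega)
  exact ⟨⟨haA, haB⟩, fun u hu => haMin u hu.1⟩

/-- Given a tree `T` rooted at `r` and tree convex sets `A`, `B` with respective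
roots `a` and `b` (elements of minimal graph distance from `r`), if `a` is at least
as far from `r` as `b` and `A ∩ B` is nonempty, then `a` is a root of `A ∩ B`:
`a ∈ A ∩ B` and `a` has minimal distance from `r` among the elements of `A ∩ B`. -/
theorem root_of_inter {U : Type} [Fintype U]
    (T : SimpleGraph U) (hT : T.IsTree) (r : U) (A B : Set U)
    (hA : TreeConvexSet T A) (hB : TreeConvexSet T B)
    (a : U) (haA : a ∈ A) (haMin : ∀ a' ∈ A, T.dist r a ≤ T.dist r a')
    (b : U) (hbB : b ∈ B) (hbMin : ∀ b' ∈ B, T.dist r b ≤ T.dist r b')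
    (hba : T.dist r b ≤ T.dist r a)
    (hne : (A ∩ B).Nonempty) :
    a ∈ A ∩ B ∧ ∀ u ∈ A ∩ B, T.dist r a ≤ T.dist r u :=
  root_of_inter_general T hT r A B hA hB a haA haMin b hbB hbMin hba hne
end

section
/- Let E_1, E_2, …, E_l be finite sets and let m be a natural number with m < l, and suppose |E_1| ≤ m. Then the intersection E_1 ∩ E_2 ∩ … ∩ E_l is nonempty if and only if for every index set I ⊆ {2, …, l} with |I| = m, the intersection of E_1 with all the sets E_i for i ∈ I is nonempty. -/
/-!
If the full intersection is empty, every point of `E 1` is missed by some `E i` with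
`i ≥ 2`; choosing one such index per point gives at most `|E 1| ≤ m` indices whose sets
already cut `E 1` down to nothing, and padding them to exactly `m` indices (possible as
`m ≤ l - 1`) only shrinks the intersection further.
-/

namespace Finset

variable {α ι : Type*}

theorem exists_subset_card_le_inter_biInter_eq_empty (s : Finset α) (J : Finset ι)
    (E : ι → Set α) (h : (s : Set α) ∩ ⋂ i ∈ J, E i = ∅) :
    ∃ I ⊆ J, #I ≤ #s ∧ (s : Set α) ∩ ⋂ i ∈ I, E i = ∅ := by
  classical
  have missed : ∀ x ∈ s, ∃ i ∈ J, x ∉ E i := by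
    intro x hx
    by_contra! hall
    exact h.subset ⟨hx, Set.mem_iInter₂.2 hall⟩
  choose f hfJ hfx using missed
  refine ⟨s.attach.image fun x => f x.1 x.2, ?_, ?_, ?_⟩
  · simp only [subset_iff, mem_image, mem_attach, true_and, Subtype.exists]
    rintro _ ⟨x, hx, rfl⟩
    exact hfJ x hx
  · exact card_image_le.trans_eq card_attach
  · refine Set.eq_empty_of_forall_notMem fun x ⟨hxs, hx⟩ => hfx x hxs ?_
    exact Set.mem_iInter₂.1 hx _ (mem_image_of_mem _ (mem_attach _ ⟨x, hxs⟩))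

theorem inter_biInter_nonempty_iff_forall_card_eq (s : Finset α) (J : Finset ι)
    (E : ι → Set α) {m : ℕ} (hs : #s ≤ m) (hmJ : m ≤ #J) :
    ((s : Set α) ∩ ⋂ i ∈ J, E i).Nonempty ↔
      ∀ I ⊆ J, #I = m → ((s : Set α) ∩ ⋂ i ∈ I, E i).Nonempty := by
  refine ⟨fun ⟨x, hxs, hx⟩ I hIJ _ => ⟨x, hxs, Set.biInter_subset_biInter_left hIJ hx⟩,
    fun hsub => ?_⟩
  by_contra hJ
  obtain ⟨I, hIJ, hIs, hI⟩ :=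
    exists_subset_card_le_inter_biInter_eq_empty s J E (Set.not_nonempty_iff_eq_empty.1 hJ)
  obtain ⟨K, hIK, hKJ, hKm⟩ := exists_subsuperset_card_eq hIJ (hIs.trans hs) hmJ
  obtain ⟨x, hxs, hx⟩ := hsub K hKJ hKm
  exact hI.subset ⟨hxs, Set.biInter_subset_biInter_left (coe_subset.2 hIK) hx⟩

end Finset

theorem Nat.insert_one_Icc_two {l : ℕ} (hl : 1 ≤ l) :
    insert 1 (Finset.Icc 2 l) = Finset.Icc 1 l := by
  ext i
  simp only [Finset.mem_insert, Finset.mem_Icc]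
  omega

/-- Given finite sets `E 1, …, E l` and a number `m < l` with `|E 1| ≤ m`, the
intersection of all `l` sets is nonempty iff the intersection of `E 1` with any
other `m` of the sets (indexed by an `m`-element subset of `{2,…,l}`) is nonempty. -/
theorem small_set_intersection_first {α : Type} (l m : ℕ) (hm : m < l)
    (E : ℕ → Finset α) (h1 : (E 1).card ≤ m) :
    (⋂ i ∈ Finset.Icc 1 l, (E i : Set α)).Nonempty ↔
      ∀ I ⊆ Finset.Icc 2 l, I.card = m →
        ((E 1 : Set α) ∩ ⋂ i ∈ I, (E i : Set α)).Nonempty := by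
  rw [← Nat.insert_one_Icc_two (by omega), Finset.set_biInter_insert]
  exact Finset.inter_biInter_nonempty_iff_forall_card_eq _ _ _ h1 (by rw [Nat.card_Icc]; omega)
end

section
/- Let E_1, E_2, …, E_l be finite sets and let m be a natural number with m < l, and suppose some E_j satisfies |E_j| ≤ m. Then the intersection E_1 ∩ E_2 ∩ … ∩ E_l is nonempty if and only if for every index set I ⊆ {1, …, l} with |I| = m + 1, the intersection of the sets E_i for i ∈ I is nonempty. -/
/-!
Every point of the small set `E j` that lies outside the full intersection is excluded by some
member of the family; `E j` together with one such witness per excluded point is a subfamily of at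
most `m + 1` sets having the same intersection as the whole family. Enlarging it to exactly
`m + 1` indices (possible since `m < l`) and applying the hypothesis gives a common point.
-/

namespace Finset

variable {ι α : Type*}

theorem exists_subset_card_le_biInter_subset (s : Finset ι) (E : ι → Finset α) {j : ι}
    (hj : j ∈ s) :
    ∃ I ⊆ s, I.card ≤ (E j).card + 1 ∧
      ⋂ i ∈ I, (E i : Set α) ⊆ ⋂ i ∈ s, (E i : Set α) := by
  classical
  let T := (E j).filter fun x => ∃ i ∈ s, x ∉ E i
  have hT : ∀ x ∈ T, ∃ i ∈ s, x ∉ E i := fun x hx => (mem_filter.mp hx).2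
  have : Nonempty ι := ⟨j⟩
  choose! f hfs hfE using hT
  refine ⟨insert j (T.image f), ?_, ?_, ?_⟩
  · exact insert_subset hj fun i hi => by
      obtain ⟨x, hx, rfl⟩ := mem_image.mp hi
      exact hfs x hx
  · calc (insert j (T.image f)).card ≤ (T.image f).card + 1 := card_insert_le _ _
      _ ≤ (E j).card + 1 := by grw [card_image_le, card_filter_le]
  · intro y hy
    simp only [Set.mem_iInter, mem_coe, mem_insert, mem_image] at hy ⊢
    have hyj : y ∈ E j := hy j (Or.inl rfl)
    by_contra! hout
    have hyT : y ∈ T := mem_filter.mpr ⟨hyj, hout⟩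
    exact hfE y hyT (hy (f y) (Or.inr ⟨y, hyT, rfl⟩))

theorem biInter_nonempty_iff_forall_card_eq (s : Finset ι) (E : ι → Finset α) {m : ℕ}
    (hm : m < s.card) {j : ι} (hj : j ∈ s) (hjm : (E j).card ≤ m) :
    (⋂ i ∈ s, (E i : Set α)).Nonempty ↔
      ∀ I ⊆ s, I.card = m + 1 → (⋂ i ∈ I, (E i : Set α)).Nonempty := by
  refine ⟨fun h I hI _ => h.mono (Set.biInter_subset_biInter_left hI), fun h => ?_⟩
  obtain ⟨I₀, hI₀s, hI₀card, hI₀⟩ := exists_subset_card_le_biInter_subset s E hj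
  obtain ⟨I, hI₀I, hIs, hIcard⟩ :=
    exists_subsuperset_card_eq hI₀s (hI₀card.trans (by omega)) hm
  exact (h I hIs hIcard).mono ((Set.biInter_subset_biInter_left hI₀I).trans hI₀)

end Finset

/-- **Small Set Intersection.**  Given finite sets `E 1, …, E l` and a number
`m < l` such that some `E j` has at most `m` elements, the intersection of all
`l` sets is nonempty iff the intersection of any `m + 1` of the sets is nonempty. -/
theorem small_set_intersection {α : Type} (l m : ℕ) (hm : m < l)
    (E : ℕ → Finset α) (j : ℕ) (hj : j ∈ Finset.Icc 1 l) (hjm : (E j).card ≤ m) :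
    (⋂ i ∈ Finset.Icc 1 l, (E i : Set α)).Nonempty ↔
      ∀ I ⊆ Finset.Icc 1 l, I.card = m + 1 →
        (⋂ i ∈ I, (E i : Set α)).Nonempty :=
  Finset.biInter_nonempty_iff_forall_card_eq _ E (by simpa using hm) hj hjm
end

section
/- Let R be a constraint network in which every constraint has arity at most r, and suppose R is strongly (2(r−1)+1)-consistent. If R is tree convex, then R is globally consistent. -/
/-- A constraint: a nonempty scope of variables and a set of allowed tuples
(total assignments whose restriction to the scope determines membership). -/
structure Constraint (V : Type) (α : Type) where
  scope : Finset V
  scope_nonempty : scope.Nonempty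
  allowed : Set (V → α)
  allowed_ext : ∀ f g : V → α, (∀ v ∈ scope, f v = g v) → f ∈ allowed → g ∈ allowed

/-- A constraint network: a finite nonempty domain for each variable and a finite
set of constraints, no two of which have the same scope. -/
structure Network (V : Type) (α : Type) [Fintype V] [DecidableEq V] where
  dom : V → Finset α
  dom_nonempty : ∀ v, (dom v).Nonempty
  cons : Set (Constraint V α)
  cons_finite : cons.Finite
  scope_inj : ∀ c ∈ cons, ∀ c' ∈ cons, c.scope = c'.scope → c = c'

namespace Network

variable {V α : Type} [Fintype V] [DecidableEq V]

/-- `f` is an instantiation of the variables `Y`: each variable of `Y` gets a value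
from its domain. -/
def Inst (R : Network V α) (Y : Set V) (f : V → α) : Prop :=
  ∀ v ∈ Y, f v ∈ R.dom v

/-- `f` is a consistent instantiation of the variables `Y`: it is an instantiation of
`Y` satisfying every constraint whose scope is contained in `Y`. -/
def ConsistentOn (R : Network V α) (Y : Set V) (f : V → α) : Prop :=
  R.Inst Y f ∧ ∀ c ∈ R.cons, (c.scope : Set V) ⊆ Y → f ∈ c.allowed

/-- `R` is `k`-consistent: every consistent instantiation of any `k - 1` distinct
variables extends consistently to any further variable. -/
def KConsistent (R : Network V α) (k : ℕ) : Prop :=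
  ∀ (Y : Finset V) (f : V → α), Y.card + 1 = k → R.ConsistentOn ↑Y f →
    ∀ x ∉ Y, ∃ u ∈ R.dom x,
      R.ConsistentOn ↑(insert x Y) (Function.update f x u)

/-- `R` is strongly `k`-consistent: `j`-consistent for every `j ≤ k`. -/
def StronglyKConsistent (R : Network V α) (k : ℕ) : Prop :=
  ∀ j ≤ k, R.KConsistent j

/-- `R` is globally consistent: strongly `n`-consistent, `n` the number of variables. -/
def GloballyConsistent (R : Network V α) : Prop :=
  R.StronglyKConsistent (Fintype.card V)

/-- The extension set of an instantiation `f` (of `c.scope − {x}`) to `x` with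
respect to the constraint `c`: the values `b` of the domain of `x` such that the
extended instantiation satisfies `c`. -/
def extSet (R : Network V α) (c : Constraint V α) (x : V) (f : V → α) : Set α :=
  {b | b ∈ R.dom x ∧ Function.update f x b ∈ c.allowed}

/-- `c` is a relevant constraint on `x` with respect to `Y`: its scope contains `x`
and its other variables all belong to `Y`. -/
def Relevant (R : Network V α) (c : Constraint V α) (x : V) (Y : Set V) : Prop :=
  c ∈ R.cons ∧ x ∈ c.scope ∧ (↑(c.scope.erase x) : Set V) ⊆ Y

/-- `c` is properly `m`-tight with respect to `x`: every extension set to `x` has at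
most `m` elements. -/
def ProperlyTightWrt (R : Network V α) (c : Constraint V α) (x : V) (m : ℕ) : Prop :=
  ∀ f : V → α, R.Inst ↑(c.scope.erase x) f → (R.extSet c x f).ncard ≤ m

/-- `c` is properly `m`-tight: properly `m`-tight with respect to each of its
variables. -/
def ProperlyTight (R : Network V α) (c : Constraint V α) (m : ℕ) : Prop :=
  ∀ x ∈ c.scope, R.ProperlyTightWrt c x m

/-- `R` (with `n` variables) is weakly `m`-tight at level `k`: for every set `Y` of
`l` variables, `k ≤ l < n`, and every variable `x ∉ Y`, some relevant constraint on
`x` with respect to `Y` is properly `m`-tight. -/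
def WeaklyTight (R : Network V α) (m k : ℕ) : Prop :=
  ∀ Y : Finset V, k ≤ Y.card → Y.card < Fintype.card V →
    ∀ x ∉ Y, ∃ c, R.Relevant c x ↑Y ∧ R.ProperlyTight c m

/-- `R` is tree convex: there is a tree on the union of all the domains under which
every nonempty extension set of every constraint is tree convex (induces a connected
subgraph). -/
def TreeConvexNet (R : Network V α) : Prop :=
  ∃ T : SimpleGraph {a : α // a ∈ ⋃ v, (R.dom v : Set α)},
    T.IsTree ∧
      ∀ c ∈ R.cons, ∀ x ∈ c.scope, ∀ f : V → α,
        R.Inst ↑(c.scope.erase x) f → (R.extSet c x f).Nonempty →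
          (T.induce (Subtype.val ⁻¹' R.extSet c x f)).Connected

/-- `R` is relationally `m`-consistent: for any `m` distinct constraints, any common
variable `x` of their scopes, and any consistent instantiation of the union of their
scopes minus `x`, some value of the domain of `x` extends it to satisfy all `m`
constraints. -/
def RelConsistent (R : Network V α) (m : ℕ) : Prop :=
  ∀ cs : Fin m → Constraint V α, Function.Injective cs →
    (∀ i, cs i ∈ R.cons) → ∀ x : V, (∀ i, x ∈ (cs i).scope) →
      ∀ f : V → α, R.ConsistentOn ((⋃ i, ((cs i).scope : Set V)) \ {x}) f →
        ∃ u ∈ R.dom x, ∀ i, Function.update f x u ∈ (cs i).allowed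

/-- `R` is strongly relationally `m`-consistent. -/
def StronglyRelConsistent (R : Network V α) (m : ℕ) : Prop :=
  ∀ j ≤ m, R.RelConsistent j

end Network


open SimpleGraph


/-!
Fix a consistent instantiation `f` of a set `Y` of variables and a new variable `x`. The
constraints that matter are the relevant ones (scope inside `Y ∪ {x}`, containing `x`), and
`u` extends `f` consistently iff it lies in all of their extension sets. Any two relevant
constraints involve at most `2(r − 1)` variables of `Y`, so strong `(2(r − 1) + 1)`-consistency
makes their extension sets intersect pairwise. By tree convexity these sets are subtrees of one
tree, and pairwise intersecting subtrees have a common point (the Helly property of trees).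
-/

namespace SimpleGraph

variable {β : Type*} {T : SimpleGraph β} {A B C : Set β}

def IsPathConvex (T : SimpleGraph β) (A : Set β) : Prop :=
  ∀ ⦃x y : β⦄ (p : T.Walk x y), p.IsPath → x ∈ A → y ∈ A → ∀ z ∈ p.support, z ∈ A

lemma isPathConvex_univ : T.IsPathConvex Set.univ :=
  fun _ _ _ _ _ _ _ _ => trivial

lemma IsPathConvex.inter (hA : T.IsPathConvex A) (hB : T.IsPathConvex B) :
    T.IsPathConvex (A ∩ B) :=
  fun _ _ p hp hx hy z hz => ⟨hA p hp hx.1 hy.1 z hz, hB p hp hx.2 hy.2 z hz⟩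

lemma IsAcyclic.isPathConvex_of_preconnected_induce (hT : T.IsAcyclic)
    (hA : (T.induce A).Preconnected) : T.IsPathConvex A := by
  classical
  intro x y p hp hx hy z hz
  obtain ⟨w⟩ := hA ⟨x, hx⟩ ⟨y, hy⟩
  have hwA : ∀ z ∈ (w.map (Embedding.induce A).toHom).support, z ∈ A := by
    intro z hz
    rw [Walk.support_map, List.mem_map] at hz
    obtain ⟨⟨z, hzA⟩, -, rfl⟩ := hz
    exact hzA
  let w' : T.Walk x y := w.map (Embedding.induce A).toHom
  have hw'A : ∀ z ∈ w'.support, z ∈ A := hwA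
  obtain rfl : p = w'.bypass :=
    congrArg Subtype.val ((hT.subsingleton_path x y).elim ⟨p, hp⟩ w'.toPath)
  exact hw'A z (w'.support_bypass_subset_support hz)

lemma Connected.mem_or_mem_of_adj (hT : T.Connected) (hB : T.IsPathConvex B)
    (hC : T.IsPathConvex C) {a u v : β} (haB : a ∈ B) (haC : a ∈ C) (huv : T.Adj u v)
    (hu : u ∈ C) (hv : v ∈ B) :
    u ∈ B ∨ v ∈ C := by
  classical
  obtain ⟨p, hp⟩ := (hT.preconnected v a).some.toPath
  by_cases hup : u ∈ p.support
  · exact .inl (hB p hp hv haB u hup)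
  · exact .inr (hC (.cons huv p) (hp.cons hup) hu haC v (by simp))

lemma Connected.exists_mem_support_inter (hT : T.Connected) (hB : T.IsPathConvex B)
    (hC : T.IsPathConvex C) (hBC : (B ∩ C).Nonempty) {u v : β} (w : T.Walk u v)
    (hw : ∀ z ∈ w.support, z ∈ B ∪ C) (hu : u ∈ C) (hv : v ∈ B) :
    ∃ z ∈ w.support, z ∈ B ∩ C := by
  obtain ⟨a, haB, haC⟩ := hBC
  induction w with
  | nil => exact ⟨_, by simp, hv, hu⟩
  | @cons u u' v huu' w ih =>
    by_cases huB : u ∈ B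
    · exact ⟨u, by simp, huB, hu⟩
    have hu'C : u' ∈ C := by
      rcases hw u' (by simp) with hu'B | hu'C
      · exact (hT.mem_or_mem_of_adj hB hC haB haC huu' hu hu'B).resolve_left huB
      · exact hu'C
    obtain ⟨z, hz, hzBC⟩ := ih (fun z hz => hw z (by simp [hz])) hu'C hv
    exact ⟨z, by simp [hz], hzBC⟩

lemma Connected.inter_inter_nonempty (hT : T.Connected) (hA : T.IsPathConvex A)
    (hB : T.IsPathConvex B) (hC : T.IsPathConvex C) (hAB : (A ∩ B).Nonempty)
    (hAC : (A ∩ C).Nonempty) (hBC : (B ∩ C).Nonempty) : (A ∩ B ∩ C).Nonempty := by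
  classical
  obtain ⟨c, hcA, hcB⟩ := hAB
  obtain ⟨b, hbA, hbC⟩ := hAC
  obtain ⟨a, haB, haC⟩ := hBC
  obtain ⟨p, hp⟩ := (hT.preconnected b a).some.toPath
  obtain ⟨q, hq⟩ := (hT.preconnected a c).some.toPath
  -- the path `w` from `b` to `c` lies in `A`, and in `C ∪ B` as `p` lies in `C` and `q` in `B`
  let w := (p.append q).bypass
  have hwBC : ∀ z ∈ w.support, z ∈ B ∪ C := fun z hz =>
    ((Walk.mem_support_append_iff p q).1 ((p.append q).support_bypass_subset_support hz)).elim
      (fun h => .inr (hC p hp hbC haC z h)) (fun h => .inl (hB q hq haB hcB z h))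
  obtain ⟨z, hz, hzB, hzC⟩ := hT.exists_mem_support_inter hB hC ⟨a, haB, haC⟩ w hwBC hbC hcB
  exact ⟨z, ⟨hA w (p.append q).bypass_isPath hbA hcA z hz, hzB⟩, hzC⟩

theorem Connected.helly_theorem {ι : Type*} (hT : T.Connected) {I : Set ι} (hI : I.Finite)
    {A : ι → Set β} (hconv : ∀ i ∈ I, T.IsPathConvex (A i))
    (hpair : ∀ i ∈ I, ∀ j ∈ I, (A i ∩ A j).Nonempty) : (⋂ i ∈ I, A i).Nonempty := by
  -- induct on `I`, intersecting a convex set `S` that meets every `A i` with one more `A i`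
  suffices ∀ S, T.IsPathConvex S → S.Nonempty → (∀ i ∈ I, (S ∩ A i).Nonempty) →
      (S ∩ ⋂ i ∈ I, A i).Nonempty by
    simpa using this Set.univ isPathConvex_univ ⟨hT.nonempty.some, trivial⟩
      (by simpa using fun i hi => (hpair i hi i hi))
  induction I, hI using Set.Finite.induction_on with
  | empty => simp
  | @insert i I _ _ ih =>
    intro S hS hSne hSA
    simp only [Set.mem_insert_iff, forall_eq_or_imp] at hconv hpair hSA
    have hIpair : ∀ j ∈ I, ∀ k ∈ I, (A j ∩ A k).Nonempty :=
      fun j hj k hk => (hpair.2 j hj).2 k hk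
    obtain ⟨z, hzS, hz⟩ := ih hconv.2 hIpair (S ∩ A i) (hS.inter hconv.1) hSA.1 fun j hj =>
      hT.inter_inter_nonempty hS hconv.1 (hconv.2 j hj) hSA.1 (hSA.2 j hj) (hpair.1.2 j hj)
    exact ⟨z, hzS.1, by simpa [Set.biInter_insert] using ⟨hzS.2, Set.mem_iInter₂.1 hz⟩⟩

end SimpleGraph

namespace Network

variable {V α : Type} [Fintype V] [DecidableEq V] (R : Network V α)
  {Y : Set V} {f : V → α} {x : V}

lemma ConsistentOn.mono {R : Network V α} {Z : Set V} (hf : R.ConsistentOn Y f) (hZY : Z ⊆ Y) :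
    R.ConsistentOn Z f :=
  ⟨fun v hv => hf.1 v (hZY hv), fun c hc hsub => hf.2 c hc (hsub.trans hZY)⟩

lemma StronglyKConsistent.exists_extension {R : Network V α} {k : ℕ}
    (hsc : R.StronglyKConsistent k) (hf : R.ConsistentOn Y f) {Z : Finset V} (hZY : ↑Z ⊆ Y)
    (hZk : Z.card < k) (hx : x ∉ Y) :
    ∃ u ∈ R.dom x, R.ConsistentOn ↑(insert x Z) (Function.update f x u) :=
  hsc (Z.card + 1) hZk Z f rfl (hf.mono hZY) x fun h => hx (hZY h)

lemma extSet_inter_nonempty {r : ℕ} (harity : ∀ c ∈ R.cons, c.scope.card ≤ r)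
    (hsc : R.StronglyKConsistent (2 * (r - 1) + 1)) (hf : R.ConsistentOn Y f) (hx : x ∉ Y)
    {c c' : Constraint V α} (hc : R.Relevant c x Y) (hc' : R.Relevant c' x Y) :
    (R.extSet c x f ∩ R.extSet c' x f).Nonempty := by
  set Z := c.scope.erase x ∪ c'.scope.erase x
  have hZY : ↑Z ⊆ Y := by
    rw [Finset.coe_union]
    exact Set.union_subset hc.2.2 hc'.2.2
  have hZcard : Z.card < 2 * (r - 1) + 1 := by
    have : Z.card ≤ _ := Finset.card_union_le (c.scope.erase x) (c'.scope.erase x)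
    have := Finset.card_erase_of_mem hc.2.1
    have := Finset.card_erase_of_mem hc'.2.1
    have := harity c hc.1
    have := harity c' hc'.1
    omega
  obtain ⟨u, hu, hcons⟩ := hsc.exists_extension hf hZY hZcard hx
  have hcZ : c.scope ⊆ insert x Z :=
    Finset.insert_erase hc.2.1 ▸ Finset.insert_subset_insert x Finset.subset_union_left
  have hc'Z : c'.scope ⊆ insert x Z :=
    Finset.insert_erase hc'.2.1 ▸ Finset.insert_subset_insert x Finset.subset_union_right
  exact ⟨u, ⟨hu, hcons.2 c hc.1 (Finset.coe_subset.2 hcZ)⟩,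
    ⟨hu, hcons.2 c' hc'.1 (Finset.coe_subset.2 hc'Z)⟩⟩

lemma exists_mem_extSet_of_pairwise (htc : R.TreeConvexNet) (hf : R.Inst Y f)
    (hpair : ∀ c, R.Relevant c x Y → ∀ c', R.Relevant c' x Y →
      (R.extSet c x f ∩ R.extSet c' x f).Nonempty) :
    ∃ u ∈ R.dom x, ∀ c, R.Relevant c x Y → u ∈ R.extSet c x f := by
  classical
  obtain ⟨T, hT, hconn⟩ := htc
  by_cases hrel : ∃ c, R.Relevant c x Y
  swap
  · obtain ⟨u, hu⟩ := R.dom_nonempty x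
    exact ⟨u, hu, fun c hc => (hrel ⟨c, hc⟩).elim⟩
  have hconv : ∀ c ∈ {c | R.Relevant c x Y},
      T.IsPathConvex (Subtype.val ⁻¹' R.extSet c x f) := fun c hc =>
    hT.isAcyclic.isPathConvex_of_preconnected_induce
      (hconn c hc.1 x hc.2.1 f (fun v hv => hf v (hc.2.2 hv)) (by simpa using hpair c hc c hc)).1
  have hpair' : ∀ c ∈ {c | R.Relevant c x Y}, ∀ c' ∈ {c | R.Relevant c x Y},
      (Subtype.val ⁻¹' R.extSet c x f ∩ Subtype.val ⁻¹' R.extSet c' x f).Nonempty :=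
    fun c hc c' hc' => by
      obtain ⟨u, hu, hu'⟩ := hpair c hc c' hc'
      have hmem : u ∈ ⋃ v, (R.dom v : Set α) := Set.mem_iUnion.2 ⟨x, hu.1⟩
      exact ⟨⟨u, hmem⟩, hu, hu'⟩
  have hfin : {c | R.Relevant c x Y}.Finite := R.cons_finite.subset fun c hc => hc.1
  obtain ⟨z, hz⟩ := hT.connected.helly_theorem hfin hconv hpair'
  rw [Set.mem_iInter₂] at hz
  obtain ⟨c₀, hc₀⟩ := hrel
  exact ⟨z, (hz c₀ hc₀).1, hz⟩

lemma consistentOn_insert_update {u : α} (hf : R.ConsistentOn Y f) (hx : x ∉ Y)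
    (hu : u ∈ R.dom x) (hext : ∀ c, R.Relevant c x Y → u ∈ R.extSet c x f) :
    R.ConsistentOn (insert x Y) (Function.update f x u) := by
  refine ⟨?_, fun c hc hsub => ?_⟩
  · rintro v (rfl | hv)
    · simpa using hu
    · rw [Function.update_of_ne (ne_of_mem_of_not_mem hv hx)]
      exact hf.1 v hv
  by_cases hxc : x ∈ c.scope
  · refine (hext c ⟨hc, hxc, ?_⟩).2
    rwa [Finset.coe_erase, Set.sdiff_singleton_subset_iff]
  · have hcY : ↑c.scope ⊆ Y := (Set.subset_insert_iff_of_notMem hxc).1 hsub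
    refine c.allowed_ext f _ (fun v hv => ?_) (hf.2 c hc hcY)
    exact (Function.update_of_ne (ne_of_mem_of_not_mem hv hxc) u f).symm

end Network

/-- **Tree Convexity.**  A tree convex constraint network with constraints of arity
at most `r` that is strongly `(2(r−1)+1)`-consistent is globally consistent. -/
theorem Network.treeConvex_globallyConsistent
    {V α : Type} [Fintype V] [DecidableEq V] (R : Network V α) (r : ℕ)
    (harity : ∀ c ∈ R.cons, c.scope.card ≤ r)
    (hsc : R.StronglyKConsistent (2 * (r - 1) + 1))
    (htc : R.TreeConvexNet) :
    R.GloballyConsistent := by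
  intro _ _ Y f _ hf x hx
  obtain ⟨u, hu, hext⟩ := R.exists_mem_extSet_of_pairwise htc hf.1
    fun c hc c' hc' => R.extSet_inter_nonempty harity hsc hf hx hc hc'
  refine ⟨u, hu, ?_⟩
  rw [Finset.coe_insert]
  exact R.consistentOn_insert_update hf hx hu hext
end

section
/- Let R be a constraint network with n variables in which there is a binary constraint on every pair of distinct variables, and let k be a natural number with k < n. If for every variable x at least n−k of the binary constraints whose scope contains x are properly m-tight, then R is weakly m-tight at level k. -/
/-!
A binary constraint through `x` is determined by its scope (no two constraints share one), hence
by its other variable. So if `|Y| ≥ k`, at most `n - |Y| - 1 < n - k` of them have that variable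
outside `Y`, and one of the at least `n - k` properly `m`-tight ones is relevant on `x` w.r.t. `Y`.
-/

theorem Finset.exists_eq_pair_of_card_eq_two {β : Type*} [DecidableEq β] {s : Finset β} {x : β}
    (hs : s.card = 2) (hx : x ∈ s) : ∃ y, y ≠ x ∧ s = {x, y} := by
  obtain ⟨y, hy⟩ := Finset.card_eq_one.mp (by rw [Finset.card_erase_of_mem hx, hs] :
    (s.erase x).card = 1)
  refine ⟨y, Finset.ne_of_mem_erase (hy ▸ Finset.mem_singleton_self y), ?_⟩
  rw [← Finset.insert_erase hx, hy]

namespace Network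

variable {V α : Type} [Fintype V] [DecidableEq V]

theorem ncard_binary_not_relevant_le (R : Network V α) {x : V} {Y : Finset V} (hx : x ∉ Y) :
    {c | c ∈ R.cons ∧ c.scope.card = 2 ∧ x ∈ c.scope ∧
        ¬ (↑(c.scope.erase x) : Set V) ⊆ ↑Y}.ncard ≤ Fintype.card V - (Y.card + 1) := by
  set S := {c | c ∈ R.cons ∧ c.scope.card = 2 ∧ x ∈ c.scope ∧
    ¬ (↑(c.scope.erase x) : Set V) ⊆ ↑Y}
  have hscopes : Constraint.scope '' S ⊆
      (fun y => ({x, y} : Finset V)) '' ↑(Finset.univ \ insert x Y) := by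
    rintro _ ⟨c, ⟨-, hcard, hxc, hout⟩, rfl⟩
    obtain ⟨y, hyx, hc⟩ := Finset.exists_eq_pair_of_card_eq_two hcard hxc
    refine ⟨y, ?_, hc.symm⟩
    rw [hc, Finset.erase_insert (by simpa using hyx.symm)] at hout
    simp_all
  calc S.ncard = (Constraint.scope '' S).ncard :=
        (Set.InjOn.ncard_image fun c hc c' hc' => R.scope_inj c hc.1 c' hc'.1).symm
    _ ≤ ((fun y => ({x, y} : Finset V)) '' ↑(Finset.univ \ insert x Y)).ncard :=
        Set.ncard_le_ncard hscopes
    _ ≤ (Finset.univ \ insert x Y).card := by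
        simpa only [Set.ncard_coe_finset] using Set.ncard_image_le (Finset.finite_toSet _)
    _ = Fintype.card V - (Y.card + 1) := by
        rw [Finset.card_sdiff_of_subset (Finset.subset_univ _),
          Finset.card_insert_of_notMem hx, Finset.card_univ]

end Network

theorem Network.weaklyTight_level_of_binary_tight_general
    {V α : Type} [Fintype V] [DecidableEq V] (R : Network V α) (m k : ℕ)
    (htight : ∀ x : V,
      Fintype.card V - k ≤
        {c | c ∈ R.cons ∧ c.scope.card = 2 ∧ x ∈ c.scope ∧
          R.ProperlyTight c m}.ncard) :
    R.WeaklyTight m k := by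
  intro Y hkY hYn x hxY
  by_contra! hnone
  have hsub : {c | c ∈ R.cons ∧ c.scope.card = 2 ∧ x ∈ c.scope ∧ R.ProperlyTight c m} ⊆
      {c | c ∈ R.cons ∧ c.scope.card = 2 ∧ x ∈ c.scope ∧
        ¬ (↑(c.scope.erase x) : Set V) ⊆ ↑Y} :=
    fun c ⟨hc, hcard, hxc, htc⟩ => ⟨hc, hcard, hxc, fun hrel => hnone c ⟨hc, hxc, hrel⟩ htc⟩
  have hcount := (Set.ncard_le_ncard hsub (R.cons_finite.subset fun _ h => h.1)).trans
    (R.ncard_binary_not_relevant_le hxY)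
  have := htight x
  omega

/-- If there is a binary constraint on every pair of distinct variables, `k < n`, and
every variable is involved in at least `n − k` properly `m`-tight binary constraints,
then the network is weakly `m`-tight at level `k`. -/
theorem Network.weaklyTight_level_of_binary_tight
    {V α : Type} [Fintype V] [DecidableEq V] (R : Network V α) (m k : ℕ)
    (hk : k < Fintype.card V)
    (hbin : ∀ x y : V, x ≠ y → ∃ c ∈ R.cons, c.scope = {x, y})
    (htight : ∀ x : V,
      Fintype.card V - k ≤
        {c | c ∈ R.cons ∧ c.scope.card = 2 ∧ x ∈ c.scope ∧
          R.ProperlyTight c m}.ncard) :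
    R.WeaklyTight m k :=
  Network.weaklyTight_level_of_binary_tight_general R m k htight
end

section
/- Let R be a constraint network with n variables whose constraints are exactly one binary constraint on every pair of distinct variables and one ternary constraint on every set of three distinct variables. If R is weakly m-tight at level 2, then the number of its constraints that are properly m-tight is at least n(n−1)/2 − 2⌊n/3⌋ if n ≡ 0 or 1 (mod 3), and at least (n−2)(3n−1)/6 if n ≡ 2 (mod 3). -/
/-!
Call a pair of variables loose when its binary constraint is not properly `m`-tight. If `{x, a}`
and `{x, b}` are loose, weak `m`-tightness for `x` and `Y = {a, b}` can only be witnessed by the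
ternary constraint on `{x, a, b}`, which is therefore properly `m`-tight. So at least
`C(n, 2) - |E| + c(E)` constraints are properly `m`-tight, where `E` is the graph of loose pairs
and `c(E)` the number of vertex sets of its paths of length two ("cherries"). Every graph on `s`
vertices has `|E| - c(E) ≤ ⌊2s/3⌋`, by induction on `s`: around a vertex of maximum degree there is
a set `X` of one to three vertices whose deletion loses at most `⌊2|X|/3⌋` more edges than
cherries, namely a vertex of degree `d ≥ 3` (it centres `C(d, 2) ≥ d` cherries), an isolated edge,
a triangle, or a suitable vertex of a path or cycle.
-/

open Finset

section Cherries

variable {V : Type} [DecidableEq V] {E : Finset (Finset V)} {S X A e : Finset V} {x y z a b : V}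

lemma Finset.eq_pair_of_mem_of_card_le_two {s : Finset V} (ha : a ∈ s) (hb : b ∈ s) (hab : a ≠ b)
    (hs : #s ≤ 2) : s = {a, b} :=
  (eq_of_subset_of_card_le (insert_subset ha (singleton_subset_iff.2 hb))
    (by rw [card_pair hab]; exact hs)).symm

lemma Finset.exists_eq_pair_of_card_eq_two_s15 (he : #e = 2) (hx : x ∈ e) :
    ∃ a, x ≠ a ∧ e = {x, a} := by
  obtain ⟨a, ha, hxa⟩ := exists_mem_ne (by omega : 1 < #e) x
  exact ⟨a, hxa.symm, eq_pair_of_mem_of_card_le_two hx ha hxa.symm he.le⟩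

/-- For a graph given by its set `E` of edges, the vertex sets of its paths of length two. -/
def cherries (E : Finset (Finset V)) : Finset (Finset V) :=
  ((E ×ˢ E).image fun p => p.1 ∪ p.2).filter (#· = 3)

lemma mem_cherries : A ∈ cherries E ↔ #A = 3 ∧ ∃ e ∈ E, ∃ f ∈ E, e ∪ f = A := by
  simp only [cherries, mem_filter, mem_image, mem_product, Prod.exists, and_assoc]
  constructor
  · rintro ⟨⟨e, f, he, hf, rfl⟩, h3⟩; exact ⟨h3, e, he, f, hf, rfl⟩
  · rintro ⟨h3, e, he, f, hf, rfl⟩; exact ⟨⟨e, f, he, hf, rfl⟩, h3⟩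

lemma cherries_mono {E' : Finset (Finset V)} (h : E' ⊆ E) : cherries E' ⊆ cherries E :=
  filter_subset_filter _ (image_subset_image (product_subset_product h h))

lemma insert_mem_cherries (ha : {x, a} ∈ E) (hb : {x, b} ∈ E) (hxa : x ≠ a) (hxb : x ≠ b)
    (hab : a ≠ b) : {x, a, b} ∈ cherries E := by
  refine mem_cherries.2 ⟨card_eq_three.2 ⟨x, a, b, hxa, hxb, hab, rfl⟩, _, ha, _, hb, ?_⟩
  ext v
  simp only [mem_union, mem_insert, mem_singleton]
  tauto

lemma exists_eq_insert_of_mem_cherries (hE : ∀ e ∈ E, #e = 2) (hA : A ∈ cherries E) :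
    ∃ x a b, x ≠ a ∧ x ≠ b ∧ a ≠ b ∧ {x, a} ∈ E ∧ {x, b} ∈ E ∧ A = {x, a, b} := by
  obtain ⟨hA3, e, he, f, hf, rfl⟩ := mem_cherries.1 hA
  obtain ⟨x, hx⟩ : (e ∩ f).Nonempty := by
    rw [nonempty_iff_ne_empty, ne_eq, ← disjoint_iff_inter_eq_empty]
    intro hef
    rw [card_union_of_disjoint hef, hE e he, hE f hf] at hA3
    omega
  obtain ⟨a, hxa, rfl⟩ := exists_eq_pair_of_card_eq_two_s15 (hE e he) (mem_inter.1 hx).1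
  obtain ⟨b, hxb, rfl⟩ := exists_eq_pair_of_card_eq_two_s15 (hE f hf) (mem_inter.1 hx).2
  have hunion : ({x, a} ∪ {x, b} : Finset V) = {x, a, b} := by
    ext v
    simp only [mem_union, mem_insert, mem_singleton]
    tauto
  refine ⟨x, a, b, hxa, hxb, ?_, he, hf, hunion⟩
  rintro rfl
  simp [card_pair hxa] at hA3

lemma card_eq_three_of_mem_cherries (hA : A ∈ cherries E) : #A = 3 :=
  (mem_cherries.1 hA).1

def meeting (F : Finset (Finset V)) (X : Finset V) : Finset (Finset V) :=
  F.filter fun e => ¬Disjoint e X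

@[simp]
lemma mem_meeting_singleton {F : Finset (Finset V)} : e ∈ meeting F {x} ↔ e ∈ F ∧ x ∈ e := by
  simp [meeting]

lemma meeting_insert (F : Finset (Finset V)) (x : V) (X : Finset V) :
    meeting F (insert x X) = meeting F {x} ∪ meeting F X := by
  ext e
  simp only [meeting, mem_union, mem_filter, disjoint_insert_right, disjoint_singleton_right]
  tauto

/-- Deleting the vertices `X` loses at most `⌊2|X|/3⌋` more edges than cherries. -/
def IsRemovable (E : Finset (Finset V)) (X : Finset V) : Prop :=
  #(meeting E X) ≤ #(meeting (cherries E) X) + 2 * #X / 3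

lemma card_le_card_cherries_add_of_isRemovable (hXS : X ⊆ S) (hX : IsRemovable E X)
    (hrest : #(E.filter (Disjoint · X)) ≤
      #(cherries (E.filter (Disjoint · X))) + 2 * #(S \ X) / 3) :
    #E ≤ #(cherries E) + 2 * #S / 3 := by
  have hsub : cherries (E.filter (Disjoint · X)) ⊆ (cherries E).filter (Disjoint · X) := by
    intro A hA
    refine mem_filter.2 ⟨cherries_mono (filter_subset _ _) hA, ?_⟩
    obtain ⟨-, e, he, f, hf, rfl⟩ := mem_cherries.1 hA
    exact disjoint_union_left.2 ⟨(mem_filter.1 he).2, (mem_filter.1 hf).2⟩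
  have hE := card_filter_add_card_filter_not (s := E) (Disjoint · X)
  have hC := card_filter_add_card_filter_not (s := cherries E) (Disjoint · X)
  have hS : #(S \ X) + #X = #S := card_sdiff_add_card_eq_card hXS
  have := card_le_card hsub
  unfold IsRemovable meeting at hX
  omega

lemma pair_union_pair (x a b : V) : ({x, a} ∪ {x, b} : Finset V) = {x, a, b} := by
  rw [← insert_union_distrib, ← insert_eq]

lemma eq_of_mem_meeting_of_mem (hE : ∀ e ∈ E, #e = 2) {f : Finset V}
    (he : e ∈ meeting E {x}) (hf : f ∈ meeting E {x}) (hae : a ∈ e) (haf : a ∈ f) (hxa : x ≠ a) :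
    e = f := by
  rw [mem_meeting_singleton] at he hf
  rw [eq_pair_of_mem_of_card_le_two he.2 hae hxa (hE e he.1).le,
    eq_pair_of_mem_of_card_le_two hf.2 haf hxa (hE f hf.1).le]

lemma union_mem_cherries_of_mem_meeting (hE : ∀ e ∈ E, #e = 2) {f : Finset V}
    (he : e ∈ meeting E {x}) (hf : f ∈ meeting E {x}) (hef : e ≠ f) : e ∪ f ∈ cherries E := by
  rw [mem_meeting_singleton] at he hf
  obtain ⟨a, hxa, rfl⟩ := exists_eq_pair_of_card_eq_two_s15 (hE e he.1) he.2
  obtain ⟨b, hxb, rfl⟩ := exists_eq_pair_of_card_eq_two_s15 (hE f hf.1) hf.2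
  rw [pair_union_pair]
  refine insert_mem_cherries he.1 hf.1 hxa hxb ?_
  rintro rfl
  exact hef rfl

lemma isRemovable_singleton_of_subset {C : Finset (Finset V)} (hC : C ⊆ cherries E)
    (hxC : ∀ A ∈ C, x ∈ A) (h : #(meeting E {x}) ≤ #C) : IsRemovable E {x} := by
  have : #C ≤ #(meeting (cherries E) {x}) :=
    card_le_card fun A hA => mem_meeting_singleton.2 ⟨hC hA, hxC A hA⟩
  unfold IsRemovable
  omega

lemma exists_eq_pair_of_mem_powersetCard_two {I : Finset (Finset V)} {p : Finset (Finset V)}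
    (hp : p ∈ I.powersetCard 2) : ∃ e ∈ I, ∃ f ∈ I, e ≠ f ∧ p = {e, f} ∧ p.sup id = e ∪ f := by
  obtain ⟨hpI, hp2⟩ := mem_powersetCard.1 hp
  obtain ⟨e, f, hef, rfl⟩ := card_eq_two.1 hp2
  exact ⟨e, hpI (mem_insert_self e _), f, hpI (mem_insert_of_mem (mem_singleton_self f)), hef,
    rfl, by simp⟩

lemma injOn_sup_powersetCard_two_meeting (hE : ∀ e ∈ E, #e = 2) :
    Set.InjOn (fun p => p.sup id) ((meeting E {x}).powersetCard 2 : Set (Finset (Finset V))) := by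
  intro p hp q hq hpq
  obtain ⟨e, he, f, hf, -, rfl, hsp⟩ := exists_eq_pair_of_mem_powersetCard_two hp
  obtain ⟨g, hg, k, hk, -, rfl, hsq⟩ := exists_eq_pair_of_mem_powersetCard_two hq
  have hmem : ∀ c ∈ meeting E {x}, c ⊆ g ∪ k → c = g ∨ c = k := by
    intro c hc hck
    obtain ⟨a, hxa, hca⟩ := exists_eq_pair_of_card_eq_two_s15 (hE c (mem_meeting_singleton.1 hc).1)
      (mem_meeting_singleton.1 hc).2
    have hac : a ∈ c := hca ▸ mem_insert_of_mem (mem_singleton_self a)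
    rcases mem_union.1 (hck hac) with hag | hak
    exacts [.inl (eq_of_mem_meeting_of_mem hE hc hg hac hag hxa),
      .inr (eq_of_mem_meeting_of_mem hE hc hk hac hak hxa)]
  have hsub : ({e, f} : Finset (Finset V)) ⊆ {g, k} := by
    simp only [hsp, hsq] at hpq
    intro c hc
    simp only [mem_insert, mem_singleton] at hc ⊢
    rcases hc with rfl | rfl
    exacts [hmem c he (hpq ▸ subset_union_left), hmem c hf (hpq ▸ subset_union_right)]
  exact eq_of_subset_of_card_le hsub
    (by rw [(mem_powersetCard.1 hp).2, (mem_powersetCard.1 hq).2])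

/-- `d ≥ 3` edges at `x` pair up into `C(d, 2) ≥ d` distinct cherries through `x`. -/
lemma isRemovable_singleton_of_three_le (hE : ∀ e ∈ E, #e = 2) (h : 3 ≤ #(meeting E {x})) :
    IsRemovable E {x} := by
  refine isRemovable_singleton_of_subset
    (C := ((meeting E {x}).powersetCard 2).image fun p => p.sup id) ?_ ?_ ?_
  · intro A hA
    obtain ⟨p, hp, rfl⟩ := mem_image.1 hA
    obtain ⟨e, he, f, hf, hef, -, hsup⟩ := exists_eq_pair_of_mem_powersetCard_two hp
    exact hsup ▸ union_mem_cherries_of_mem_meeting hE he hf hef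
  · intro A hA
    obtain ⟨p, hp, rfl⟩ := mem_image.1 hA
    obtain ⟨e, he, f, -, -, -, hsup⟩ := exists_eq_pair_of_mem_powersetCard_two hp
    exact hsup ▸ mem_union_left _ (mem_meeting_singleton.1 he).2
  · rw [card_image_of_injOn (injOn_sup_powersetCard_two_meeting hE), card_powersetCard,
      Nat.choose_two_right, Nat.le_div_iff_mul_le two_pos]
    exact Nat.mul_le_mul_left _ (by omega)

lemma isRemovable_pair (hxy : x ≠ y) (hx : meeting E {x} ⊆ {{x, y}})
    (hy : meeting E {y} ⊆ {{x, y}}) : IsRemovable E {x, y} := by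
  have := card_le_card (union_subset hx hy)
  rw [← meeting_insert, card_singleton] at this
  unfold IsRemovable
  rw [card_pair hxy]
  omega

lemma pair_ne_pair {u v w : V} (huv : u ≠ v) (hvw : v ≠ w) : ({u, v} : Finset V) ≠ {u, w} := by
  intro h
  have hv : v ∈ ({u, w} : Finset V) := h ▸ mem_insert_of_mem (mem_singleton_self v)
  simp only [mem_insert, mem_singleton] at hv
  exact hv.elim (huv ·.symm) hvw

lemma meeting_singleton_subset_pair {f : Finset V} (hdeg : #(meeting E {x}) ≤ 2)
    (he : e ∈ E) (hf : f ∈ E) (hxe : x ∈ e) (hxf : x ∈ f) (hef : e ≠ f) :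
    meeting E {x} ⊆ {e, f} :=
  (eq_pair_of_mem_of_card_le_two (mem_meeting_singleton.2 ⟨he, hxe⟩)
    (mem_meeting_singleton.2 ⟨hf, hxf⟩) hef hdeg).le

lemma isRemovable_triangle (hxy : x ≠ y) (hxz : x ≠ z) (hyz : y ≠ z) (hxyE : {x, y} ∈ E)
    (hxzE : {x, z} ∈ E) (hyzE : {y, z} ∈ E)
    (hdeg : ∀ v ∈ ({x, y, z} : Finset V), #(meeting E {v}) ≤ 2) : IsRemovable E {x, y, z} := by
  have hx : meeting E {x} ⊆ {{x, y}, {x, z}} :=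
    meeting_singleton_subset_pair (hdeg x (by simp)) hxyE hxzE (by simp) (by simp)
      (pair_ne_pair hxy hyz)
  have hy : meeting E {y} ⊆ {{x, y}, {y, z}} :=
    meeting_singleton_subset_pair (hdeg y (by simp)) hxyE hyzE (by simp) (by simp)
      (pair_comm x y ▸ pair_ne_pair hxy.symm hxz)
  have hz : meeting E {z} ⊆ {{x, z}, {y, z}} :=
    meeting_singleton_subset_pair (hdeg z (by simp)) hxzE hyzE (by simp) (by simp)
      (pair_comm x z ▸ pair_comm y z ▸ pair_ne_pair hxz.symm hxy)
  have hedges : meeting E {x, y, z} ⊆ {{x, y}, {x, z}, {y, z}} := by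
    rw [meeting_insert, meeting_insert]
    refine union_subset (hx.trans ?_) (union_subset (hy.trans ?_) (hz.trans ?_)) <;>
      simp [insert_subset_iff]
  have hcherries : 1 ≤ #(meeting (cherries E) {x, y, z}) :=
    card_pos.2 ⟨_, mem_filter.2 ⟨insert_mem_cherries hxyE hxzE hxy hxz hyz, by simp⟩⟩
  unfold IsRemovable
  rw [card_eq_three.2 ⟨x, y, z, hxy, hxz, hyz, rfl⟩]
  have := (card_le_card hedges).trans card_le_three
  omega

/-- The removable set is the triangle `{x, y, z}`, or `{x}`, or `{y}` when `y` has degree one. -/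
lemma exists_isRemovable_of_degree_le_two (hE : E ⊆ S.powersetCard 2)
    (hmax : ∀ v ∈ S, #(meeting E {v}) ≤ 2) (hxy : x ≠ y) (hxz : x ≠ z) (hyz : y ≠ z)
    (hxyE : {x, y} ∈ E) (hxzE : {x, z} ∈ E) : ∃ X ⊆ S, X.Nonempty ∧ IsRemovable E X := by
  have hE2 : ∀ e ∈ E, #e = 2 := fun e he => (mem_powersetCard.1 (hE he)).2
  have hES : ∀ e ∈ E, e ⊆ S := fun e he => (mem_powersetCard.1 (hE he)).1
  have hxS : x ∈ S := hES _ hxyE (mem_insert_self x _)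
  have hyS : y ∈ S := hES _ hxyE (mem_insert_of_mem (mem_singleton_self y))
  have hzS : z ∈ S := hES _ hxzE (mem_insert_of_mem (mem_singleton_self z))
  have hmx : meeting E {x} ⊆ {{x, y}, {x, z}} :=
    meeting_singleton_subset_pair (hmax x hxS) hxyE hxzE (by simp) (by simp)
      (pair_ne_pair hxy hyz)
  have hcherry : {x, y, z} ∈ cherries E := insert_mem_cherries hxyE hxzE hxy hxz hyz
  by_cases hyzE : {y, z} ∈ E
  · have hXS : {x, y, z} ⊆ S := by simp [insert_subset_iff, hxS, hyS, hzS]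
    exact ⟨{x, y, z}, hXS, insert_nonempty _ _,
      isRemovable_triangle hxy hxz hyz hxyE hxzE hyzE fun v hv => hmax v (hXS hv)⟩
  by_cases hy2 : 1 < #(meeting E {y})
  · obtain ⟨g, hg, hgxy⟩ := exists_mem_ne hy2 {x, y}
    rw [mem_meeting_singleton] at hg
    obtain ⟨w, hyw, rfl⟩ := exists_eq_pair_of_card_eq_two_s15 (hE2 _ hg.1) hg.2
    have hwx : w ≠ x := by rintro rfl; exact hgxy (pair_comm _ _)
    have hwz : w ≠ z := by rintro rfl; exact hyzE hg.1
    have hyxw : {y, x, w} ∈ cherries E :=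
      insert_mem_cherries (pair_comm x y ▸ hxyE) hg.1 hxy.symm hyw hwx.symm
    refine ⟨{x}, singleton_subset_iff.2 hxS, singleton_nonempty x,
      isRemovable_singleton_of_subset (C := {{x, y, z}, {y, x, w}})
        (insert_subset hcherry (singleton_subset_iff.2 hyxw)) (by simp) ?_⟩
    have hne : ({x, y, z} : Finset V) ≠ {y, x, w} := by
      intro h
      have hz : z ∈ ({y, x, w} : Finset V) := h ▸ by simp
      simp only [mem_insert, mem_singleton] at hz
      rcases hz with hz | hz | hz
      exacts [hyz hz.symm, hxz hz.symm, hwz hz.symm]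
    rw [card_pair hne]
    exact (card_le_card hmx).trans card_le_two
  · refine ⟨{y}, singleton_subset_iff.2 hyS, singleton_nonempty y,
      isRemovable_singleton_of_subset (C := {{x, y, z}}) (singleton_subset_iff.2 hcherry)
        (by simp) (by rw [card_singleton]; omega)⟩

lemma exists_isRemovable (hE : E ⊆ S.powersetCard 2) (hne : E.Nonempty) :
    ∃ X ⊆ S, X.Nonempty ∧ IsRemovable E X := by
  have hE2 : ∀ e ∈ E, #e = 2 := fun e he => (mem_powersetCard.1 (hE he)).2
  have hES : ∀ e ∈ E, e ⊆ S := fun e he => (mem_powersetCard.1 (hE he)).1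
  obtain ⟨e₀, he₀⟩ := hne
  obtain ⟨v₀, hv₀⟩ : e₀.Nonempty := card_pos.1 (by rw [hE2 e₀ he₀]; norm_num)
  obtain ⟨x, hxS, hmax⟩ :=
    S.exists_max_image (fun v => #(meeting E {v})) ⟨v₀, hES e₀ he₀ hv₀⟩
  have hpos : 0 < #(meeting E {x}) :=
    (card_pos.2 ⟨e₀, mem_meeting_singleton.2 ⟨he₀, hv₀⟩⟩).trans_le (hmax v₀ (hES e₀ he₀ hv₀))
  by_cases h3 : 3 ≤ #(meeting E {x})
  · exact ⟨{x}, singleton_subset_iff.2 hxS, singleton_nonempty x,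
      isRemovable_singleton_of_three_le hE2 h3⟩
  obtain ⟨e, he⟩ := card_pos.1 hpos
  rw [mem_meeting_singleton] at he
  obtain ⟨y, hxy, rfl⟩ := exists_eq_pair_of_card_eq_two_s15 (hE2 _ he.1) he.2
  have hyS : y ∈ S := hES _ he.1 (mem_insert_of_mem (mem_singleton_self y))
  by_cases h2 : 1 < #(meeting E {x})
  · obtain ⟨f, hf, hfxy⟩ := exists_mem_ne h2 {x, y}
    rw [mem_meeting_singleton] at hf
    obtain ⟨z, hxz, rfl⟩ := exists_eq_pair_of_card_eq_two_s15 (hE2 _ hf.1) hf.2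
    have hyz : y ≠ z := by rintro rfl; exact hfxy rfl
    exact exists_isRemovable_of_degree_le_two hE (fun v hv => (hmax v hv).trans (by omega))
      hxy hxz hyz he.1 hf.1
  · have hisolated : ∀ v ∈ ({x, y} : Finset V), meeting E {v} ⊆ {{x, y}} := by
      intro v hv g hg
      have hxyv : {x, y} ∈ meeting E {v} := mem_meeting_singleton.2 ⟨he.1, hv⟩
      exact mem_singleton.2
        (card_le_one.1 ((hmax v (hES _ he.1 hv)).trans (by omega)) g hg _ hxyv)
    exact ⟨{x, y}, hES _ he.1, insert_nonempty _ _,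
      isRemovable_pair hxy (hisolated x (by simp)) (hisolated y (by simp))⟩

theorem card_le_card_cherries_add (hE : E ⊆ S.powersetCard 2) :
    #E ≤ #(cherries E) + 2 * #S / 3 := by
  induction S using Finset.strongInduction generalizing E with
  | H S ih =>
  rcases E.eq_empty_or_nonempty with rfl | hne
  · simp
  obtain ⟨X, hXS, hXne, hX⟩ := exists_isRemovable hE hne
  refine card_le_card_cherries_add_of_isRemovable hXS hX (ih _ (sdiff_ssubset hXS hXne) ?_)
  intro e he
  obtain ⟨heE, hdisj⟩ := mem_filter.1 he
  obtain ⟨heS, he2⟩ := mem_powersetCard.1 (hE heE)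
  exact mem_powersetCard.2 ⟨subset_sdiff.2 ⟨heS, hdisj⟩, he2⟩

end Cherries

lemma Nat.choose_two_sub_two_mul_div_three_of_mod_three_le_one {n : ℕ}
    (hn : n % 3 = 0 ∨ n % 3 = 1) :
    n.choose 2 - 2 * n / 3 = n * (n - 1) / 2 - 2 * (n / 3) := by
  rw [Nat.choose_two_right]
  omega

lemma Nat.choose_two_sub_two_mul_div_three_of_mod_three_eq_two {n : ℕ} (hn : n % 3 = 2) :
    n.choose 2 - 2 * n / 3 = (n - 2) * (3 * n - 1) / 6 := by
  obtain ⟨k, rfl⟩ : ∃ k, n = 3 * k + 2 := ⟨n / 3, by omega⟩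
  rw [Nat.choose_two_right, show 3 * k + 2 - 1 = 3 * k + 1 by omega,
    show 3 * (3 * k + 2) - 1 = 9 * k + 5 by omega, Nat.add_sub_cancel]
  ring_nf
  omega

namespace Network

variable {V α : Type} [Fintype V] [DecidableEq V]

open Classical in
noncomputable def tightScopes (R : Network V α) (m : ℕ) : Finset (Finset V) :=
  {S | ∃ c ∈ R.cons, c.scope = S ∧ R.ProperlyTight c m}

lemma mem_tightScopes {R : Network V α} {m : ℕ} {S : Finset V} :
    S ∈ R.tightScopes m ↔ ∃ c ∈ R.cons, c.scope = S ∧ R.ProperlyTight c m := by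
  simp [tightScopes]

lemma ncard_properlyTight_eq_card_tightScopes (R : Network V α) (m : ℕ) :
    {c | c ∈ R.cons ∧ R.ProperlyTight c m}.ncard = #(R.tightScopes m) := by
  have himage :
      Constraint.scope '' {c | c ∈ R.cons ∧ R.ProperlyTight c m} = ↑(R.tightScopes m) := by
    ext S
    simp only [Set.mem_image, Set.mem_ofPred_eq, mem_coe, mem_tightScopes, and_assoc]
    exact exists_congr fun c => by tauto
  rw [← Set.ncard_coe_finset, ← himage,
    Set.InjOn.ncard_image fun c hc c' hc' h => R.scope_inj c hc.1 c' hc'.1 h]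

lemma cherries_subset_tightScopes (R : Network V α) (m : ℕ)
    (honly : ∀ c ∈ R.cons, c.scope.card = 2 ∨ c.scope.card = 3) (hwt : R.WeaklyTight m 2) :
    cherries (univ.powersetCard 2 \ R.tightScopes m) ⊆ R.tightScopes m := by
  intro A hA
  obtain ⟨x, a, b, hxa, hxb, hab, hxaE, hxbE, rfl⟩ := exists_eq_insert_of_mem_cherries
    (fun e he => (mem_powersetCard.1 (mem_sdiff.1 he).1).2) hA
  have hY : #({a, b} : Finset V) = 2 := card_pair hab
  have hxY : x ∉ ({a, b} : Finset V) := by simp [hxa, hxb]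
  have hn : #(insert x {a, b}) ≤ Fintype.card V := card_le_univ _
  rw [card_insert_of_notMem hxY, hY] at hn
  obtain ⟨c, ⟨hc, hxc, hcY⟩, htight⟩ := hwt {a, b} hY.ge (by omega) x hxY
  have hsub : c.scope ⊆ {x, a, b} := by
    rw [← insert_erase hxc]
    exact insert_subset_insert x (coe_subset.1 hcY)
  rcases honly c hc with h2 | h3
  · obtain ⟨v, hv⟩ := card_eq_one.1 (by rw [card_erase_of_mem hxc, h2] : #(c.scope.erase x) = 1)
    have hvY : v ∈ ({a, b} : Finset V) := coe_subset.1 hcY (hv ▸ mem_singleton_self v)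
    have hxv : {x, v} ∈ R.tightScopes m :=
      mem_tightScopes.2 ⟨c, hc, by rw [← insert_erase hxc, hv], htight⟩
    simp only [mem_insert, mem_singleton] at hvY
    rcases hvY with rfl | rfl
    exacts [absurd hxv (mem_sdiff.1 hxaE).2, absurd hxv (mem_sdiff.1 hxbE).2]
  · exact mem_tightScopes.2 ⟨c, hc, eq_of_subset_of_card_le hsub (h3 ▸ card_le_three), htight⟩

lemma choose_two_sub_le_card_tightScopes (R : Network V α) (m : ℕ)
    (honly : ∀ c ∈ R.cons, c.scope.card = 2 ∨ c.scope.card = 3) (hwt : R.WeaklyTight m 2) :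
    (Fintype.card V).choose 2 - 2 * Fintype.card V / 3 ≤ #(R.tightScopes m) := by
  have hloose := card_le_card_cherries_add (S := univ)
    (sdiff_subset : univ.powersetCard 2 \ R.tightScopes m ⊆ _)
  have hdisj : Disjoint (univ.powersetCard 2 ∩ R.tightScopes m)
      (cherries (univ.powersetCard 2 \ R.tightScopes m)) := disjoint_left.2 fun A hA hA' => by
    have h2 := (mem_powersetCard.1 (mem_inter.1 hA).1).2
    have h3 := card_eq_three_of_mem_cherries hA'
    omega
  have htight := card_le_card (union_subset (inter_subset_right (s₁ := univ.powersetCard 2))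
    (R.cherries_subset_tightScopes m honly hwt))
  rw [card_union_of_disjoint hdisj] at htight
  have hsplit := card_sdiff_add_card_inter (univ.powersetCard 2) (R.tightScopes m)
  rw [card_powersetCard, card_univ] at hsplit
  rw [card_univ] at hloose
  omega

end Network

theorem Network.weaklyTight_min_tight_count_general
    {V α : Type} [Fintype V] [DecidableEq V] (R : Network V α) (m : ℕ)
    (honly : ∀ c ∈ R.cons, c.scope.card = 2 ∨ c.scope.card = 3)
    (hwt : R.WeaklyTight m 2) :
    (Fintype.card V % 3 = 0 ∨ Fintype.card V % 3 = 1 →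
      Fintype.card V * (Fintype.card V - 1) / 2 - 2 * (Fintype.card V / 3) ≤
        {c | c ∈ R.cons ∧ R.ProperlyTight c m}.ncard) ∧
    (Fintype.card V % 3 = 2 →
      (Fintype.card V - 2) * (3 * Fintype.card V - 1) / 6 ≤
        {c | c ∈ R.cons ∧ R.ProperlyTight c m}.ncard) := by
  rw [R.ncard_properlyTight_eq_card_tightScopes]
  have h := R.choose_two_sub_le_card_tightScopes m honly hwt
  exact ⟨fun hn => Nat.choose_two_sub_two_mul_div_three_of_mod_three_le_one hn ▸ h,
    fun hn => Nat.choose_two_sub_two_mul_div_three_of_mod_three_eq_two hn ▸ h⟩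

/-- Lower bound on the number of properly `m`-tight constraints of a network, with
exactly one binary constraint on every pair of distinct variables and one ternary
constraint on every three distinct variables, that is weakly `m`-tight at level `2`:
at least `n(n−1)/2 − 2⌊n/3⌋` constraints are properly `m`-tight if
`n ≡ 0, 1 (mod 3)`, and at least `(n−2)(3n−1)/6` otherwise. -/
theorem Network.weaklyTight_min_tight_count
    {V α : Type} [Fintype V] [DecidableEq V] (R : Network V α) (m : ℕ)
    (hexist : ∀ S : Finset V, S.card = 2 ∨ S.card = 3 → ∃ c ∈ R.cons, c.scope = S)
    (honly : ∀ c ∈ R.cons, c.scope.card = 2 ∨ c.scope.card = 3)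
    (hwt : R.WeaklyTight m 2) :
    (Fintype.card V % 3 = 0 ∨ Fintype.card V % 3 = 1 →
      Fintype.card V * (Fintype.card V - 1) / 2 - 2 * (Fintype.card V / 3) ≤
        {c | c ∈ R.cons ∧ R.ProperlyTight c m}.ncard) ∧
    (Fintype.card V % 3 = 2 →
      (Fintype.card V - 2) * (3 * Fintype.card V - 1) / 6 ≤
        {c | c ∈ R.cons ∧ R.ProperlyTight c m}.ncard) :=
  Network.weaklyTight_min_tight_count_general R m honly hwt
end
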